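/- arXiv:2311.07080 — 8 statements merged into one kernel-verified Lean document; each statement's English description precedes it below -/
import Mathlib

section
/- Let p ∈ ℕ. There exists a unique Borel measure μ on [0,∞) such that for every n ∈ ℕ the function x ↦ x^n is μ-integrable and ∫_0^∞ x^n dμ(x) = n!/(n+1)^{2p}. (Consequently there is a unique radial measure σ on ℂ with (1/2π)∫_ℂ z^n z̄^m dσ = (n!/(n+1)^{2p}) δ_{n,m}.) -/
open MeasureTheory Real Set Filter
open scoped ENNReal NNReal Topology

lemma base_integrableOn (n : ℕ) :
    IntegrableOn (fun x : ℝ => x ^ n * Real.exp (-x)) (Set.Ioi 0) := by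
  have h := Real.GammaIntegral_convergent (s := (n : ℝ) + 1) (by positivity)
  refine (h.congr_fun (fun x hx => ?_) measurableSet_Ioi)
  have : ((n : ℝ) + 1 - 1) = (n : ℝ) := by ring
  rw [this]
  beta_reduce
  rw [Real.rpow_natCast, mul_comm]

lemma base_integral (n : ℕ) :
    ∫ x in Set.Ioi (0:ℝ), x ^ n * Real.exp (-x) = n.factorial := by
  have h := Real.Gamma_eq_integral (s := (n : ℝ) + 1) (by positivity)
  have h2 : Real.Gamma ((n:ℝ) + 1) = n.factorial := by
    exact_mod_cast Real.Gamma_nat_eq_factorial n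
  rw [h2] at h
  rw [h]
  refine setIntegral_congr_fun measurableSet_Ioi (fun x hx => ?_)
  have : ((n : ℝ) + 1 - 1) = (n : ℝ) := by ring
  rw [this, Real.rpow_natCast, mul_comm]

noncomputable def expMeas : Measure ℝ :=
  (volume.restrict (Set.Ioi 0)).withDensity fun x => ((Real.exp (-x)).toNNReal : ℝ≥0∞)

lemma expMeas_integrable (n : ℕ) : Integrable (fun x : ℝ => x ^ n) expMeas := by
  rw [expMeas, integrable_withDensity_iff]
  · refine (base_integrableOn n).congr_fun (fun x hx => ?_) measurableSet_Ioi
    rw [ENNReal.coe_toReal, Real.coe_toNNReal _ (Real.exp_nonneg _)]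
  · exact ((Real.measurable_exp.comp measurable_neg).real_toNNReal).coe_nnreal_ennreal
  · exact Eventually.of_forall (fun x => ENNReal.coe_lt_top)

lemma expMeas_integral (n : ℕ) : ∫ x, x ^ n ∂expMeas = n.factorial := by
  rw [expMeas, integral_withDensity_eq_integral_smul
    (f := fun x : ℝ => (Real.exp (-x)).toNNReal) (by fun_prop)]
  rw [← base_integral n]
  refine setIntegral_congr_fun measurableSet_Ioi (fun x hx => ?_)
  simp [NNReal.smul_def, Real.coe_toNNReal _ (Real.exp_nonneg _), mul_comm]

lemma expMeas_Iio : expMeas (Set.Iio 0) = 0 := by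
  rw [expMeas, withDensity_apply _ measurableSet_Iio]
  rw [Measure.restrict_restrict measurableSet_Iio]
  have : Set.Iio (0:ℝ) ∩ Set.Ioi 0 = ∅ := by
    ext x; simp only [Set.mem_inter_iff, Set.mem_Iio, Set.mem_Ioi, Set.mem_empty_iff_false,
      iff_false, not_and]; intro h1; linarith
  rw [this]
  simp

lemma expMeas_finite : IsFiniteMeasure expMeas := by
  constructor
  have h := (expMeas_integrable 0)
  simp only [pow_zero] at h
  have := (integrable_const_iff (c := (1:ℝ))).mp h
  rcases this with h | h
  · norm_num at h
  · exact h.measure_univ_lt_top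

lemma unif_integrableOn (n : ℕ) :
    IntegrableOn (fun y : ℝ => y ^ n) (Set.Ioc 0 1) := by
  exact (continuous_pow n).integrableOn_Ioc

lemma unif_integral (n : ℕ) :
    ∫ y in Set.Ioc (0:ℝ) 1, y ^ n = 1 / ((n : ℝ) + 1) := by
  rw [← intervalIntegral.integral_of_le (by norm_num : (0:ℝ) ≤ 1)]
  rw [integral_pow]
  norm_num

lemma step_measure (μ : Measure ℝ) [IsFiniteMeasure μ] (h0 : μ (Set.Iio 0) = 0)
    (hI : ∀ n : ℕ, Integrable (fun x : ℝ => x ^ n) μ) :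
    ∃ μ' : Measure ℝ, IsFiniteMeasure μ' ∧ μ' (Set.Iio 0) = 0 ∧
      ∀ n : ℕ, Integrable (fun x : ℝ => x ^ n) μ' ∧
        ∫ x, x ^ n ∂μ' = (∫ x, x ^ n ∂μ) / ((n : ℝ) + 1) := by
  set ν : Measure ℝ := volume.restrict (Set.Ioc 0 1) with hν
  have hνfin : IsFiniteMeasure ν := by
    constructor
    rw [hν, Measure.restrict_apply_univ, Real.volume_Ioc]
    simp
  have hm : Measurable fun q : ℝ × ℝ => q.1 * q.2 := measurable_fst.mul measurable_snd
  refine ⟨Measure.map (fun q : ℝ × ℝ => q.1 * q.2) (μ.prod ν), ?_, ?_, fun n => ?_⟩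
  · exact Measure.isFiniteMeasure_map _ _
  · rw [Measure.map_apply hm measurableSet_Iio]
    refine measure_mono_null (t := (Set.Iio 0 ×ˢ Set.univ) ∪ (Set.univ ×ˢ Set.Iio 0))
      (fun q hq => ?_) ?_
    · simp only [Set.mem_preimage, Set.mem_Iio] at hq
      rcases mul_neg_iff.mp hq with ⟨h1, h2⟩ | ⟨h1, h2⟩
      · exact Or.inr ⟨Set.mem_univ _, h2⟩
      · exact Or.inl ⟨h1, Set.mem_univ _⟩
    · refine measure_union_null ?_ ?_
      · rw [Measure.prod_prod, h0, zero_mul]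
      · rw [Measure.prod_prod]
        have : ν (Set.Iio 0) = 0 := by
          rw [hν, Measure.restrict_apply measurableSet_Iio]
          refine measure_mono_null (fun x hx => ?_) (measure_empty (μ := volume))
          · simp only [Set.mem_inter_iff, Set.mem_Iio, Set.mem_Ioc] at hx
            exact absurd hx.2.1 (not_lt.mpr hx.1.le)
        rw [this, mul_zero]
  · constructor
    · rw [integrable_map_measure (by fun_prop) hm.aemeasurable]
      have : ((fun x : ℝ => x ^ n) ∘ fun q : ℝ × ℝ => q.1 * q.2)
          = fun q : ℝ × ℝ => q.1 ^ n * q.2 ^ n := by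
        funext q; simp [mul_pow]
      rw [this]
      exact (hI n).mul_prod (unif_integrableOn n)
    · rw [integral_map hm.aemeasurable (by fun_prop)]
      have : ∫ q, (q.1 * q.2) ^ n ∂(μ.prod ν) = ∫ q : ℝ × ℝ, q.1 ^ n * q.2 ^ n ∂(μ.prod ν) := by
        congr 1; funext q; rw [mul_pow]
      rw [this, integral_prod_mul (f := fun x : ℝ => x ^ n) (g := fun y : ℝ => y ^ n)]
      rw [hν, unif_integral]
      ring

lemma exists_moment_measure (k : ℕ) :
    ∃ μ : Measure ℝ, IsFiniteMeasure μ ∧ μ (Set.Iio 0) = 0 ∧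
      ∀ n : ℕ, Integrable (fun x : ℝ => x ^ n) μ ∧
        ∫ x, x ^ n ∂μ = (n.factorial : ℝ) / ((n : ℝ) + 1) ^ k := by
  induction k with
  | zero =>
    exact ⟨expMeas, expMeas_finite, expMeas_Iio, fun n =>
      ⟨expMeas_integrable n, by rw [expMeas_integral]; simp⟩⟩
  | succ k ih =>
    obtain ⟨μ, hfin, h0, hmom⟩ := ih
    have : IsFiniteMeasure μ := hfin
    obtain ⟨μ', hfin', h0', hmom'⟩ := step_measure μ h0 (fun n => (hmom n).1)
    refine ⟨μ', hfin', h0', fun n => ⟨(hmom' n).1, ?_⟩⟩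
    rw [(hmom' n).2, (hmom n).2, div_div, ← pow_succ]

lemma choose_le_two_pow {m k : ℕ} (h : k ≤ m) : m.choose k ≤ 2 ^ m := by
  rw [← Nat.sum_range_choose m]
  exact Finset.single_le_sum (fun _ _ => Nat.zero_le _)
    (Finset.mem_range.mpr (Nat.lt_succ_of_le h))

lemma fact_add_le (n k : ℕ) :
    ((n + k).factorial : ℝ) ≤ 2 ^ (n + k) * ((n.factorial : ℝ) * k.factorial) := by
  have h1 := Nat.add_choose_mul_factorial_mul_factorial n k
  have h2 : (n + k).choose k ≤ 2 ^ (n + k) := choose_le_two_pow (Nat.le_add_left _ _)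
  have : (n + k).factorial ≤ 2 ^ (n + k) * (n.factorial * k.factorial) := by
    calc (n + k).factorial = (n + k).choose k * n.factorial * k.factorial := h1.symm
    _ ≤ 2 ^ (n + k) * n.factorial * k.factorial := by
        exact Nat.mul_le_mul_right _ (Nat.mul_le_mul_right _ h2)
    _ = 2 ^ (n + k) * (n.factorial * k.factorial) := by ring
  exact_mod_cast this

noncomputable def Mom (μ : Measure ℝ) (a : ℝ) (n : ℕ) : ℝ :=
  ∫ x, x ^ n * Real.exp (-(a * x)) ∂μ

section Uniq

variable {μ : Measure ℝ} (h0 : μ (Set.Iio 0) = 0)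
  (hI : ∀ n : ℕ, Integrable (fun x : ℝ => x ^ n) μ)

include h0 in
lemma ae_nonneg : ∀ᵐ x ∂μ, 0 ≤ x := by
  rw [ae_iff]
  have : {x : ℝ | ¬ 0 ≤ x} = Set.Iio 0 := by ext x; simp
  rw [this, h0]

include h0 hI in
lemma Mom_integrable {a : ℝ} (ha : 0 ≤ a) (n : ℕ) :
    Integrable (fun x : ℝ => x ^ n * Real.exp (-(a * x))) μ := by
  refine (hI n).mono ((by continuity : Continuous fun x : ℝ =>
    x ^ n * Real.exp (-(a * x))).aestronglyMeasurable) ?_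
  filter_upwards [ae_nonneg h0] with x hx
  rw [norm_mul, Real.norm_eq_abs (Real.exp _), abs_of_pos (Real.exp_pos _)]
  have hax : 0 ≤ a * x := mul_nonneg ha hx
  calc ‖x ^ n‖ * Real.exp (-(a * x)) ≤ ‖x ^ n‖ * 1 := by
        refine mul_le_mul_of_nonneg_left ?_ (norm_nonneg _)
        rw [← Real.exp_zero]
        exact Real.exp_le_exp.mpr (by linarith)
  _ = ‖x ^ n‖ := mul_one _

include h0 hI in
lemma Mom_norm_integral_le {a : ℝ} (ha : 0 ≤ a) (n : ℕ) :
    ∫ x, ‖x ^ n * Real.exp (-(a * x))‖ ∂μ ≤ ∫ x, x ^ n ∂μ := by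
  refine integral_mono_ae ((Mom_integrable h0 hI ha n).norm) (hI n) ?_
  filter_upwards [ae_nonneg h0] with x hx
  rw [norm_mul, Real.norm_eq_abs, Real.norm_eq_abs (Real.exp _),
    abs_of_pos (Real.exp_pos _), abs_of_nonneg (pow_nonneg hx n)]
  have hax : 0 ≤ a * x := mul_nonneg ha hx
  calc x ^ n * Real.exp (-(a * x)) ≤ x ^ n * 1 := by
        refine mul_le_mul_of_nonneg_left ?_ (pow_nonneg hx n)
        rw [← Real.exp_zero]
        exact Real.exp_le_exp.mpr (by linarith)
  _ = x ^ n := mul_one _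

include h0 hI in
lemma Mom_expand (hs : ∀ m : ℕ, ∫ x, x ^ m ∂μ ≤ m.factorial) {a : ℝ} (ha : 0 ≤ a) (n : ℕ) :
    Mom μ (a + 4⁻¹) n = ∑' k : ℕ, (-(4:ℝ)⁻¹) ^ k / k.factorial * Mom μ a (n + k) := by
  set F : ℕ → ℝ → ℝ := fun k x =>
    (-(4:ℝ)⁻¹) ^ k / k.factorial * (x ^ (n + k) * Real.exp (-(a * x))) with hF
  have hFint : ∀ k, Integrable (F k) μ := fun k =>
    (Mom_integrable h0 hI ha (n + k)).const_mul _
  have habs : ∀ k : ℕ, ‖(-(4:ℝ)⁻¹) ^ k / k.factorial‖ = (4:ℝ)⁻¹ ^ k / k.factorial := by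
    intro k
    rw [Real.norm_eq_abs, abs_div, abs_pow, abs_neg, abs_of_pos (by norm_num : (0:ℝ) < 4⁻¹),
      abs_of_pos (by positivity : (0:ℝ) < (k.factorial : ℝ))]
  have hFnorm : ∀ k, ∫ x, ‖F k x‖ ∂μ ≤ ((2:ℝ) ^ n * n.factorial) * (2:ℝ)⁻¹ ^ k := by
    intro k
    have step1 : ∫ x, ‖F k x‖ ∂μ
        = (4:ℝ)⁻¹ ^ k / k.factorial * ∫ x, ‖x ^ (n + k) * Real.exp (-(a * x))‖ ∂μ := by
      rw [← habs k, ← integral_const_mul]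
      refine integral_congr_ae (Eventually.of_forall fun x => ?_)
      rw [hF]; exact norm_mul _ _
    have step2 : ∫ x, ‖x ^ (n + k) * Real.exp (-(a * x))‖ ∂μ ≤ ((n + k).factorial : ℝ) :=
      le_trans (Mom_norm_integral_le h0 hI ha (n + k)) (hs (n + k))
    rw [step1]
    have hfle := fact_add_le n k
    have key : (4:ℝ)⁻¹ ^ k / k.factorial * ((n + k).factorial : ℝ)
        ≤ ((2:ℝ) ^ n * n.factorial) * (2:ℝ)⁻¹ ^ k := by
      rw [div_mul_eq_mul_div, div_le_iff₀ (by positivity : (0:ℝ) < (k.factorial : ℝ))]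
      calc (4:ℝ)⁻¹ ^ k * ((n + k).factorial : ℝ)
          ≤ (4:ℝ)⁻¹ ^ k * ((2:ℝ) ^ (n + k) * ((n.factorial : ℝ) * k.factorial)) :=
            mul_le_mul_of_nonneg_left hfle (by positivity)
        _ = ((2:ℝ) ^ n * n.factorial) * (2:ℝ)⁻¹ ^ k * k.factorial := by
            rw [pow_add]
            have h24 : ((4:ℝ)⁻¹) ^ k * (2:ℝ) ^ k = (2:ℝ)⁻¹ ^ k := by
              rw [← mul_pow]; norm_num
            calc (4:ℝ)⁻¹ ^ k * ((2:ℝ) ^ n * (2:ℝ) ^ k * ((n.factorial : ℝ) * k.factorial))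
                = (2:ℝ) ^ n * (n.factorial : ℝ) * ((4:ℝ)⁻¹ ^ k * (2:ℝ) ^ k) * k.factorial := by
                  ring
              _ = ((2:ℝ) ^ n * n.factorial) * (2:ℝ)⁻¹ ^ k * k.factorial := by rw [h24]
    refine le_trans ?_ key
    exact mul_le_mul_of_nonneg_left step2 (by positivity)
  have hFsum : Summable fun k => ∫ x, ‖F k x‖ ∂μ := by
    refine Summable.of_nonneg_of_le (fun k => integral_nonneg fun x => norm_nonneg _)
      hFnorm ?_
    exact (summable_geometric_of_lt_one (by norm_num) (by norm_num)).mul_left _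
  have hpt : ∀ x : ℝ, ∑' k, F k x = x ^ n * Real.exp (-((a + 4⁻¹) * x)) := by
    intro x
    have h1 : ∀ k : ℕ, F k x
        = (x ^ n * Real.exp (-(a * x))) * ((-(4⁻¹ * x)) ^ k / k.factorial) := by
      intro k
      simp only [hF]
      rw [(by rw [← neg_mul, mul_pow] : (-(4⁻¹ * x) : ℝ) ^ k = (-(4:ℝ)⁻¹) ^ k * x ^ k),
        pow_add]
      ring
    rw [tsum_congr h1, tsum_mul_left]
    have hexp : ∑' k : ℕ, (-(4⁻¹ * x)) ^ k / (k.factorial : ℝ) = Real.exp (-(4⁻¹ * x)) := by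
      rw [Real.exp_eq_exp_ℝ, NormedSpace.exp_eq_tsum_div]
    rw [hexp, mul_assoc, ← Real.exp_add]
    ring_nf
  have := integral_tsum_of_summable_integral_norm hFint hFsum
  have hlhs : ∫ x, (∑' k, F k x) ∂μ = Mom μ (a + 4⁻¹) n := by
    rw [Mom]
    refine integral_congr_ae (Eventually.of_forall fun x => ?_)
    exact hpt x
  have hrhs : ∀ k : ℕ, ∫ x, F k x ∂μ = (-(4:ℝ)⁻¹) ^ k / k.factorial * Mom μ a (n + k) := by
    intro k
    rw [hF, Mom, integral_const_mul]
  rw [← hlhs, ← this]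
  exact tsum_congr hrhs

end Uniq

lemma finite_of_integrable_pow {μ : Measure ℝ}
    (hI : ∀ n : ℕ, Integrable (fun x : ℝ => x ^ n) μ) : IsFiniteMeasure μ := by
  constructor
  have h := hI 0
  simp only [pow_zero] at h
  rcases (integrable_const_iff (c := (1:ℝ))).mp h with h | h
  · norm_num at h
  · exact h.measure_univ_lt_top

section Grid

variable {μ ν : Measure ℝ} (hμ0 : μ (Set.Iio 0) = 0) (hν0 : ν (Set.Iio 0) = 0)
  (hμI : ∀ n : ℕ, Integrable (fun x : ℝ => x ^ n) μ)
  (hνI : ∀ n : ℕ, Integrable (fun x : ℝ => x ^ n) ν)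
  (hμs : ∀ m : ℕ, ∫ x, x ^ m ∂μ ≤ m.factorial)
  (hνs : ∀ m : ℕ, ∫ x, x ^ m ∂ν ≤ m.factorial)
  (hmom : ∀ n : ℕ, ∫ x, x ^ n ∂μ = ∫ x, x ^ n ∂ν)

include hμ0 hν0 hμI hνI hμs hνs hmom in
lemma Mom_grid_eq : ∀ j : ℕ, ∀ n : ℕ, Mom μ ((j : ℝ) / 4) n = Mom ν ((j : ℝ) / 4) n := by
  intro j
  induction j with
  | zero =>
    intro n
    simp only [Nat.cast_zero, zero_div, Mom, zero_mul, neg_zero, Real.exp_zero, mul_one]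
    exact hmom n
  | succ j ih =>
    intro n
    have hc : ((j + 1 : ℕ) : ℝ) / 4 = (j : ℝ) / 4 + 4⁻¹ := by push_cast; ring
    have hj4 : (0:ℝ) ≤ (j : ℝ) / 4 := by positivity
    rw [hc, Mom_expand hμ0 hμI hμs hj4 n, Mom_expand hν0 hνI hνs hj4 n]
    exact tsum_congr fun k => by rw [ih (n + k)]

include hμ0 hν0 hμI hνI hμs hνs hmom in
lemma laplace_nat_eq (k : ℕ) :
    ∫ x, Real.exp (-((k : ℝ) * x)) ∂μ = ∫ x, Real.exp (-((k : ℝ) * x)) ∂ν := by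
  have h := Mom_grid_eq hμ0 hν0 hμI hνI hμs hνs hmom (4 * k) 0
  have hc : ((4 * k : ℕ) : ℝ) / 4 = (k : ℝ) := by push_cast; ring
  rw [hc] at h
  simpa only [Mom, pow_zero, one_mul] using h

end Grid

noncomputable def emap (μ : Measure ℝ) : Measure ℝ :=
  Measure.map (fun x : ℝ => Real.exp (-x)) μ

lemma emap_ae {μ : Measure ℝ} (h0 : μ (Set.Iio 0) = 0) :
    ∀ᵐ y ∂(emap μ), y ∈ Set.Icc (0:ℝ) 1 := by
  rw [emap]
  refine (ae_map_iff (by fun_prop) measurableSet_Icc).mpr ?_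
  filter_upwards [ae_nonneg h0] with x hx
  constructor
  · exact (Real.exp_pos _).le
  · rw [← Real.exp_zero]
    exact Real.exp_le_exp.mpr (by linarith)

lemma emap_moment (μ : Measure ℝ) (k : ℕ) :
    ∫ y, y ^ k ∂(emap μ) = ∫ x, Real.exp (-((k : ℝ) * x)) ∂μ := by
  rw [emap, integral_map (by fun_prop) (by fun_prop)]
  refine integral_congr_ae (Eventually.of_forall fun x => ?_)
  show Real.exp (-x) ^ k = Real.exp (-((k : ℝ) * x))
  rw [← Real.exp_nat_mul]
  ring_nf

lemma eq_of_compact_moments {P Q : Measure ℝ} [IsFiniteMeasure P] [IsFiniteMeasure Q]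
    (hP : ∀ᵐ y ∂P, y ∈ Set.Icc (0:ℝ) 1) (hQ : ∀ᵐ y ∂Q, y ∈ Set.Icc (0:ℝ) 1)
    (h : ∀ k : ℕ, ∫ y, y ^ k ∂P = ∫ y, y ^ k ∂Q) : P = Q := by
  have intCont : ∀ (R : Measure ℝ) [IsFiniteMeasure R], (∀ᵐ y ∂ R, y ∈ Set.Icc (0:ℝ) 1) →
      ∀ g : ℝ → ℝ, Continuous g → Integrable g R := by
    intro R _ hR g hg
    obtain ⟨C, hC⟩ := (isCompact_Icc (a := (0:ℝ)) (b := 1)).exists_bound_of_continuousOn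
      hg.continuousOn
    refine Integrable.mono' (integrable_const C) hg.aestronglyMeasurable ?_
    filter_upwards [hR] with y hy
    exact hC y hy
  have key : ∀ g : ℝ → ℝ, Continuous g → ∫ y, g y ∂P = ∫ y, g y ∂Q := by
    intro g hg
    have intgP := intCont P hP g hg
    have intgQ := intCont Q hQ g hg
    refine eq_of_forall_dist_le fun ε hε => ?_
    set K : ℝ := (P Set.univ).toReal + (Q Set.univ).toReal with hK
    have hK0 : (0:ℝ) ≤ K := by positivity
    set δ : ℝ := ε / (2 * (K + 1)) with hδ
    have hδ0 : 0 < δ := by positivity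
    obtain ⟨pol, hpol⟩ := exists_polynomial_near_of_continuousOn 0 1 g hg.continuousOn δ hδ0
    have intpolP := intCont P hP _ pol.continuous
    have intpolQ := intCont Q hQ _ pol.continuous
    have hsum : ∀ (R : Measure ℝ) [IsFiniteMeasure R], (∀ᵐ y ∂ R, y ∈ Set.Icc (0:ℝ) 1) →
        ∫ y, Polynomial.eval y pol ∂ R
          = ∑ i ∈ Finset.range (pol.natDegree + 1), pol.coeff i * ∫ y, y ^ i ∂ R := by
      intro R _ hR
      have : ∫ y, Polynomial.eval y pol ∂ R
          = ∫ y, ∑ i ∈ Finset.range (pol.natDegree + 1), pol.coeff i * y ^ i ∂ R := by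
        refine integral_congr_ae (Eventually.of_forall fun y => ?_)
        exact Polynomial.eval_eq_sum_range y
      rw [this, integral_finset_sum _ (fun i _ => (intCont R hR _ (by continuity)))]
      exact Finset.sum_congr rfl fun i _ => integral_const_mul _ _
    have hpolEq : ∫ y, Polynomial.eval y pol ∂P = ∫ y, Polynomial.eval y pol ∂Q := by
      rw [hsum P hP, hsum Q hQ]
      exact Finset.sum_congr rfl fun i _ => by rw [h i]
    have hd : ∀ (R : Measure ℝ) [IsFiniteMeasure R], (∀ᵐ y ∂ R, y ∈ Set.Icc (0:ℝ) 1) →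
        Integrable g R →
        |∫ y, g y ∂ R - ∫ y, Polynomial.eval y pol ∂ R| ≤ δ * (R Set.univ).toReal := by
      intro R _ hR hgR
      have intpolR := intCont R hR _ pol.continuous
      rw [← integral_sub hgR intpolR]
      have habs : |∫ y, (g y - Polynomial.eval y pol) ∂ R|
          ≤ ∫ y, |g y - Polynomial.eval y pol| ∂ R := by
        simpa [Real.norm_eq_abs] using
          norm_integral_le_integral_norm (μ := R) (fun y => g y - Polynomial.eval y pol)
      refine le_trans habs ?_
      calc ∫ y, |g y - Polynomial.eval y pol| ∂ R ≤ ∫ _y, δ ∂ R := by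
            refine integral_mono_ae ((hgR.sub intpolR).abs) (integrable_const δ) ?_
            filter_upwards [hR] with y hy
            rw [abs_sub_comm]
            exact (hpol y hy).le
        _ = δ * (R Set.univ).toReal := by rw [integral_const, smul_eq_mul, mul_comm, Measure.real]
    have h1 := hd P hP intgP
    have h2 := hd Q hQ intgQ
    have hδK : δ * K ≤ ε := by
      rw [hδ, div_mul_eq_mul_div, div_le_iff₀ (by positivity : (0:ℝ) < 2 * (K + 1))]
      nlinarith
    have e1 := abs_le.mp h1
    have e2 := abs_le.mp h2
    rw [Real.dist_eq, abs_le]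
    have hKexp : δ * (P Set.univ).toReal + δ * (Q Set.univ).toReal ≤ ε := by
      refine le_trans (le_of_eq ?_) hδK
      rw [hK]
      ring
    constructor <;> linarith [e1.1, e1.2, e2.1, e2.2, hpolEq, hKexp]
  refine ext_of_forall_lintegral_eq_of_IsFiniteMeasure fun f => ?_
  have hint : ∀ (R : Measure ℝ) [IsFiniteMeasure R],
      Integrable (fun y => (f y : ℝ)) R := fun R _ =>
    (f.integrable_of_nnreal R).congr (Eventually.of_forall fun y => rfl)
  rw [lintegral_coe_eq_integral f (hint P), lintegral_coe_eq_integral f (hint Q),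
    key (fun y => (f y : ℝ)) (by exact NNReal.continuous_coe.comp f.continuous)]

lemma recover (μ : Measure ℝ) : Measure.map (fun y : ℝ => -Real.log y) (emap μ) = μ := by
  rw [emap, Measure.map_map (g := fun y : ℝ => -Real.log y) (Real.measurable_log.neg) (by fun_prop)]
  have : ((fun y : ℝ => -Real.log y) ∘ fun x : ℝ => Real.exp (-x)) = id := by
    funext x
    simp [Function.comp, Real.log_exp]
  rw [this, Measure.map_id]

lemma moment_unique (p : ℕ) (μ ν : Measure ℝ)
    (hμ : μ (Set.Iio 0) = 0 ∧ ∀ n : ℕ, Integrable (fun x : ℝ => x ^ n) μ ∧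
      ∫ x, x ^ n ∂μ = (n.factorial : ℝ) / ((n : ℝ) + 1) ^ (2 * p))
    (hν : ν (Set.Iio 0) = 0 ∧ ∀ n : ℕ, Integrable (fun x : ℝ => x ^ n) ν ∧
      ∫ x, x ^ n ∂ν = (n.factorial : ℝ) / ((n : ℝ) + 1) ^ (2 * p)) : μ = ν := by
  obtain ⟨hμ0, hμm⟩ := hμ
  obtain ⟨hν0, hνm⟩ := hν
  have hμI : ∀ n : ℕ, Integrable (fun x : ℝ => x ^ n) μ := fun n => (hμm n).1
  have hνI : ∀ n : ℕ, Integrable (fun x : ℝ => x ^ n) ν := fun n => (hνm n).1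
  have hbd : ∀ n : ℕ, (n.factorial : ℝ) / ((n : ℝ) + 1) ^ (2 * p) ≤ n.factorial := by
    intro n
    refine div_le_self (by positivity) ?_
    refine one_le_pow₀ ?_
    have := Nat.cast_nonneg (α := ℝ) n
    linarith
  have hμs : ∀ m : ℕ, ∫ x, x ^ m ∂μ ≤ m.factorial := fun m => (hμm m).2 ▸ hbd m
  have hνs : ∀ m : ℕ, ∫ x, x ^ m ∂ν ≤ m.factorial := fun m => (hνm m).2 ▸ hbd m
  have hmom : ∀ n : ℕ, ∫ x, x ^ n ∂μ = ∫ x, x ^ n ∂ν := fun n => by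
    rw [(hμm n).2, (hνm n).2]
  have : IsFiniteMeasure μ := finite_of_integrable_pow hμI
  have : IsFiniteMeasure ν := finite_of_integrable_pow hνI
  have hem : emap μ = emap ν := by
    have : IsFiniteMeasure (emap μ) := by rw [emap]; exact Measure.isFiniteMeasure_map _ _
    have : IsFiniteMeasure (emap ν) := by rw [emap]; exact Measure.isFiniteMeasure_map _ _
    refine eq_of_compact_moments (emap_ae hμ0) (emap_ae hν0) fun k => ?_
    rw [emap_moment, emap_moment]
    exact laplace_nat_eq hμ0 hν0 hμI hνI hμs hνs hmom k
  rw [← recover μ, ← recover ν, hem]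

open MeasureTheory

/-- There exists a unique Borel measure `μ` on `[0,∞)` (formalized as a measure on `ℝ`
vanishing on `(-∞,0)`) whose `n`-th moment is `n!/(n+1)^(2p)` for every `n`. -/
theorem stmt2 (p : ℕ) :
    ∃! μ : Measure ℝ,
      μ (Set.Iio 0) = 0 ∧
      ∀ n : ℕ, Integrable (fun x : ℝ => x ^ n) μ ∧
        ∫ x, x ^ n ∂μ = (n.factorial : ℝ) / ((n : ℝ) + 1) ^ (2 * p) := by
  obtain ⟨μ, hfin, h0, hmom⟩ := exists_moment_measure (2 * p)
  exact ⟨μ, ⟨h0, hmom⟩, fun ν hν => moment_unique p ν μ hν ⟨h0, hmom⟩⟩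
end

section
/- For all p, N ∈ ℕ, the real symmetric (N+1)×(N+1) matrix T_N with entries (T_N)_{i,j} = (i+j)!/(i+j+1)^{2p} for 0 ≤ i,j ≤ N is positive semidefinite. -/
open MeasureTheory Real Set

namespace Stmt3Aux

/-- Lebesgue measure on `(0,1]`. -/
noncomputable def nu : Measure ℝ := volume.restrict (Ioc (0:ℝ) 1)

instance : IsFiniteMeasure nu := by
  unfold nu; infer_instance

lemma meas_exp_neg : Measurable fun x : ℝ => (Real.exp (-x)).toNNReal :=
  (Real.measurable_exp.comp measurable_neg).real_toNNReal

/-- The measure `e^{-x} dx` on `(0,∞)`. -/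
noncomputable def mu0 : Measure ℝ :=
  (volume.restrict (Ioi (0:ℝ))).withDensity (fun x => ((Real.exp (-x)).toNNReal : ENNReal))

lemma nu_integrable (n : ℕ) : Integrable (fun x : ℝ => x ^ n) nu := by
  unfold nu
  exact (continuous_pow n).integrableOn_Ioc

lemma nu_moment (n : ℕ) : ∫ x, x ^ n ∂nu = 1 / ((n : ℝ) + 1) := by
  unfold nu
  rw [← intervalIntegral.integral_of_le (by norm_num : (0:ℝ) ≤ 1), integral_pow]
  norm_num

lemma mu0_integrable (n : ℕ) : Integrable (fun x : ℝ => x ^ n) mu0 := by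
  unfold mu0
  rw [integrable_withDensity_iff (by exact meas_exp_neg.coe_nnreal_ennreal)
    (Filter.Eventually.of_forall fun x => ENNReal.coe_lt_top)]
  have h := Real.GammaIntegral_convergent (s := (n : ℝ) + 1) (by positivity)
  simp only [add_sub_cancel_right] at h
  apply h.congr_fun ?_ measurableSet_Ioi
  intro x hx
  simp only [ENNReal.coe_toReal, Real.coe_toNNReal _ (Real.exp_nonneg _)]
  rw [← Real.rpow_natCast x n]
  ring

lemma mu0_moment (n : ℕ) : ∫ x, x ^ n ∂mu0 = (n.factorial : ℝ) := by
  unfold mu0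
  rw [integral_withDensity_eq_integral_smul meas_exp_neg]
  rw [← Real.Gamma_nat_eq_factorial n,
    Real.Gamma_eq_integral (by positivity : (0:ℝ) < (n : ℝ) + 1)]
  simp only [add_sub_cancel_right]
  refine setIntegral_congr_fun measurableSet_Ioi fun x hx => ?_
  simp only [NNReal.smul_def, Real.coe_toNNReal _ (Real.exp_nonneg _), smul_eq_mul]
  rw [← Real.rpow_natCast x n]

instance : IsFiniteMeasure mu0 := by
  refine isFiniteMeasure_withDensity ?_
  have h : Integrable (fun x : ℝ => Real.exp (-x)) (volume.restrict (Ioi (0:ℝ))) :=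
    by simpa [IntegrableOn] using exp_neg_integrableOn_Ioi 0 one_pos
  have := h.lintegral_lt_top
  simp only [ENNReal.ofReal] at this
  exact this.ne

/-- Recursively defined measures: `mu p` has `n`-th moment `n!/(n+1)^(2p)`. -/
noncomputable def mu : ℕ → Measure ℝ
  | 0 => mu0
  | p + 1 =>
      Measure.map (fun z : ℝ × ℝ => z.1 * z.2)
        (nu.prod (Measure.map (fun z : ℝ × ℝ => z.1 * z.2) (nu.prod (mu p))))

lemma meas_mul : Measurable fun z : ℝ × ℝ => z.1 * z.2 :=
  measurable_fst.mul measurable_snd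

/-- One multiplication step. -/
lemma step (μ : Measure ℝ) [IsFiniteMeasure μ]
    (hint : ∀ n : ℕ, Integrable (fun x : ℝ => x ^ n) μ) :
    IsFiniteMeasure (Measure.map (fun z : ℝ × ℝ => z.1 * z.2) (nu.prod μ)) ∧
      (∀ n : ℕ, Integrable (fun x : ℝ => x ^ n)
        (Measure.map (fun z : ℝ × ℝ => z.1 * z.2) (nu.prod μ))) ∧
      ∀ n : ℕ, ∫ x, x ^ n ∂(Measure.map (fun z : ℝ × ℝ => z.1 * z.2) (nu.prod μ)) =
        (1 / ((n : ℝ) + 1)) * ∫ x, x ^ n ∂μ := by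
  have hprodint : ∀ n : ℕ, Integrable (fun z : ℝ × ℝ => (z.1 * z.2) ^ n) (nu.prod μ) := by
    intro n
    have := (nu_integrable n).mul_prod (hint n)
    simpa [mul_pow] using this
  refine ⟨Measure.isFiniteMeasure_map _ _, fun n => ?_, fun n => ?_⟩
  · rw [integrable_map_measure ((continuous_pow n).aestronglyMeasurable)
      meas_mul.aemeasurable]
    exact hprodint n
  · rw [integral_map meas_mul.aemeasurable
      ((continuous_pow n).aestronglyMeasurable)]
    simp_rw [mul_pow]
    rw [integral_prod_mul (fun x : ℝ => x ^ n) (fun x : ℝ => x ^ n), nu_moment]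

lemma mu_props (p : ℕ) :
    IsFiniteMeasure (mu p) ∧ (∀ n : ℕ, Integrable (fun x : ℝ => x ^ n) (mu p)) ∧
      ∀ n : ℕ, ∫ x, x ^ n ∂(mu p) = (n.factorial : ℝ) / ((n : ℝ) + 1) ^ (2 * p) := by
  induction p with
  | zero =>
      refine ⟨?_, ?_, ?_⟩
      · show IsFiniteMeasure mu0; infer_instance
      · show ∀ n : ℕ, Integrable (fun x : ℝ => x ^ n) mu0; exact mu0_integrable
      · intro n; show ∫ x, x ^ n ∂mu0 = _; simp [mu0_moment]
  | succ p ih =>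
      obtain ⟨hfin, hint, hmom⟩ := ih
      haveI := hfin
      obtain ⟨hfin1, hint1, hmom1⟩ := step (mu p) hint
      haveI := hfin1
      obtain ⟨hfin2, hint2, hmom2⟩ := step _ hint1
      refine ⟨by rw [mu]; exact hfin2, by rw [mu]; exact hint2, fun n => ?_⟩
      rw [mu]
      rw [hmom2, hmom1, hmom]
      have hn : ((n : ℝ) + 1) ≠ 0 := by positivity
      rw [show 2 * (p + 1) = 2 * p + 2 by ring, pow_add]
      have key : ∀ F x y : ℝ, x ≠ 0 → 1 / x * (1 / x * (F / y)) = F / (y * x ^ 2) := by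
        intro F x y hx
        rw [sq]
        field_simp
      exact key _ _ _ hn

/-- Hankel matrices of moment sequences are positive semidefinite. -/
lemma hankel_psd (μ : Measure ℝ) (N : ℕ)
    (hint : ∀ n : ℕ, Integrable (fun x : ℝ => x ^ n) μ) :
    (Matrix.of fun i j : Fin (N + 1) =>
      ∫ x, x ^ ((i : ℕ) + (j : ℕ)) ∂μ).PosSemidef := by
  rw [Matrix.posSemidef_iff_dotProduct_mulVec]
  constructor
  · ext i j
    simp only [Matrix.conjTranspose_apply, Matrix.of_apply, star_trivial]
    rw [add_comm]
  · intro v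
    have hsq : ∀ x : ℝ, (∑ i : Fin (N + 1), v i * x ^ (i : ℕ)) ^ 2 =
        ∑ i : Fin (N + 1), ∑ j : Fin (N + 1), v i * v j * x ^ ((i : ℕ) + (j : ℕ)) := by
      intro x
      rw [sq, Finset.sum_mul_sum]
      refine Finset.sum_congr rfl fun i _ => Finset.sum_congr rfl fun j _ => ?_
      rw [pow_add]; ring
    have h1 : ∫ x, (∑ i : Fin (N + 1), v i * x ^ (i : ℕ)) ^ 2 ∂μ =
        ∑ i : Fin (N + 1), ∑ j : Fin (N + 1),
          v i * v j * ∫ x, x ^ ((i : ℕ) + (j : ℕ)) ∂μ := by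
      simp_rw [hsq]
      rw [integral_finset_sum _ fun i _ =>
        integrable_finset_sum _ fun j _ => (hint _).const_mul _]
      refine Finset.sum_congr rfl fun i _ => ?_
      rw [integral_finset_sum _ fun j _ => (hint _).const_mul _]
      exact Finset.sum_congr rfl fun j _ => integral_const_mul _ _
    have h2 : dotProduct (star v) ((Matrix.of fun i j : Fin (N + 1) =>
        ∫ x, x ^ ((i : ℕ) + (j : ℕ)) ∂μ).mulVec v) =
        ∑ i : Fin (N + 1), ∑ j : Fin (N + 1),
          v i * v j * ∫ x, x ^ ((i : ℕ) + (j : ℕ)) ∂μ := by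
      simp only [dotProduct, Matrix.mulVec, Matrix.of_apply, star_trivial,
        Pi.star_apply, Finset.mul_sum]
      exact Finset.sum_congr rfl fun i _ => Finset.sum_congr rfl fun j _ => by ring
    rw [h2, ← h1]
    exact integral_nonneg fun x => sq_nonneg _

end Stmt3Aux

/-- The Hankel matrix with entries `(i+j)!/(i+j+1)^(2p)`, `0 ≤ i,j ≤ N`,
is positive semidefinite. -/
theorem stmt3 (p N : ℕ) :
    (Matrix.of fun i j : Fin (N + 1) =>
      ((((i : ℕ) + (j : ℕ)).factorial : ℝ) / ((i : ℕ) + (j : ℕ) + 1 : ℝ) ^ (2 * p))).PosSemidef := by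
  obtain ⟨hfin, hint, hmom⟩ := Stmt3Aux.mu_props p
  have h := Stmt3Aux.hankel_psd (Stmt3Aux.mu p) N hint
  have he : (Matrix.of fun i j : Fin (N + 1) =>
      ((((i : ℕ) + (j : ℕ)).factorial : ℝ) / ((i : ℕ) + (j : ℕ) + 1 : ℝ) ^ (2 * p))) =
      Matrix.of fun i j : Fin (N + 1) =>
        ∫ x, x ^ ((i : ℕ) + (j : ℕ)) ∂(Stmt3Aux.mu p) := by
    ext i j
    rw [Matrix.of_apply, Matrix.of_apply, hmom]
    push_cast
    ring
  rw [he]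
  exact h
end

section
/- For all p, N ∈ ℕ, the real symmetric (N+1)×(N+1) matrix S_N with entries (S_N)_{i,j} = (i+j+1)!/(i+j+2)^{2p} for 0 ≤ i,j ≤ N is positive semidefinite. -/
open Matrix Finset Real MeasureTheory Set

lemma psd_of_form {n : ℕ} (M : Matrix (Fin n) (Fin n) ℝ)
    (hsym : ∀ i j, M i j = M j i)
    (h : ∀ x : Fin n → ℝ, 0 ≤ ∑ i, ∑ j, x i * M i j * x j) : M.PosSemidef := by
  rw [Matrix.posSemidef_iff_dotProduct_mulVec]
  constructor
  · ext i j
    simp [Matrix.conjTranspose_apply, hsym i j]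
  · intro x
    have := h x
    simpa [dotProduct, Matrix.mulVec, Finset.mul_sum, mul_assoc] using this

lemma form_nonneg {n : ℕ} {M : Matrix (Fin n) (Fin n) ℝ} (hM : M.PosSemidef)
    (x : Fin n → ℝ) : 0 ≤ ∑ i, ∑ j, x i * M i j * x j := by
  have := hM.dotProduct_mulVec_nonneg x
  simpa [dotProduct, Matrix.mulVec, Finset.mul_sum, mul_assoc] using this

lemma sum_swap3 {n : ℕ} (f : Fin n → Fin n → Fin n → ℝ) :
    ∑ i, ∑ j, ∑ k, f i j k = ∑ k, ∑ i, ∑ j, f i j k := by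
  rw [show (∑ i, ∑ j, ∑ k, f i j k) = ∑ i, ∑ k, ∑ j, f i j k from
    Finset.sum_congr rfl fun i _ => Finset.sum_comm, Finset.sum_comm]

lemma schur {n : ℕ} {A B : Matrix (Fin n) (Fin n) ℝ} (hA : A.PosSemidef)
    (hB : B.PosSemidef) :
    (Matrix.of fun i j => A i j * B i j).PosSemidef := by
  obtain ⟨U, hU⟩ : ∃ U : Matrix (Fin n) (Fin n) ℝ, A = Uᴴ * U := by
    open scoped MatrixOrder in exact CStarAlgebra.nonneg_iff_eq_star_mul_self.mp hA.nonneg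
  have hA' : ∀ i j, A i j = ∑ k, U k i * U k j := by
    intro i j
    rw [hU]
    simp [Matrix.mul_apply, Matrix.conjTranspose_apply]
  have hBs : ∀ i j, B i j = B j i := fun i j => by
    conv_lhs => rw [← hB.1]
    simp [Matrix.conjTranspose_apply]
  apply psd_of_form
  · intro i j
    simp only [Matrix.of_apply]
    rw [hA' i j, hA' j i, hBs i j]
    congr 1
    exact Finset.sum_congr rfl fun k _ => mul_comm _ _
  · intro x
    have key : ∑ i, ∑ j, x i * (Matrix.of fun i j => A i j * B i j) i j * x j
        = ∑ k, ∑ i, ∑ j, (fun i => U k i * x i) i * B i j * (fun i => U k i * x i) j := by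
      rw [← sum_swap3]
      refine Finset.sum_congr rfl fun i _ => Finset.sum_congr rfl fun j _ => ?_
      simp only [Matrix.of_apply, hA' i j, Finset.sum_mul, Finset.mul_sum]
      exact Finset.sum_congr rfl fun k _ => by ring
    rw [key]
    exact Finset.sum_nonneg fun k _ => form_nonneg hB _

lemma hilbert_psd (m : ℕ) :
    (Matrix.of fun i j : Fin m => (1 / ((i : ℕ) + (j : ℕ) + 2 : ℝ))).PosSemidef := by
  apply psd_of_form
  · intro i j
    simp only [Matrix.of_apply]
    ring_nf
  · intro x
    have hval : ∀ i j : Fin m,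
        ∫ t in (0:ℝ)..1, x i * x j * t ^ ((i : ℕ) + (j : ℕ) + 1)
          = x i * (1 / ((i : ℕ) + (j : ℕ) + 2 : ℝ)) * x j := by
      intro i j
      rw [intervalIntegral.integral_const_mul, integral_pow]
      rw [one_pow, zero_pow (by omega), sub_zero]
      push_cast
      ring
    have hsum : ∑ i, ∑ j, x i * (Matrix.of fun i j : Fin m =>
          (1 / ((i : ℕ) + (j : ℕ) + 2 : ℝ))) i j * x j
        = ∫ t in (0:ℝ)..1, (∑ i, x i * t ^ (i : ℕ))^2 * t := by
      have : ∀ t : ℝ, (∑ i, x i * t ^ (i : ℕ))^2 * t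
          = ∑ i, ∑ j, x i * x j * t ^ ((i : ℕ) + (j : ℕ) + 1) := by
        intro t
        rw [sq, Finset.sum_mul_sum, Finset.sum_mul]
        refine Finset.sum_congr rfl fun i _ => ?_
        rw [Finset.sum_mul]
        refine Finset.sum_congr rfl fun j _ => ?_
        ring
      simp_rw [this]
      rw [intervalIntegral.integral_finset_sum]
      · refine Finset.sum_congr rfl fun i _ => ?_
        rw [intervalIntegral.integral_finset_sum]
        · exact Finset.sum_congr rfl fun j _ => (hval i j).symm
        · intro j _
          exact (Continuous.intervalIntegrable (by continuity) _ _)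
      · intro i _
        refine Continuous.intervalIntegrable ?_ _ _
        continuity
    rw [hsum]
    apply intervalIntegral.integral_nonneg (by norm_num)
    intro t ht
    have : 0 ≤ t := ht.1
    positivity

lemma exp_pow_integrable (n : ℕ) :
    IntegrableOn (fun t : ℝ => Real.exp (-t) * t ^ n) (Ioi 0) := by
  have h := Real.GammaIntegral_convergent (s := (n : ℝ) + 1) (by positivity)
  simpa [Real.rpow_natCast] using h

lemma exp_pow_integral (n : ℕ) :
    (∫ t in Ioi (0:ℝ), Real.exp (-t) * t ^ n) = (n.factorial : ℝ) := by
  rw [← Real.Gamma_nat_eq_factorial, Real.Gamma_eq_integral (show (0:ℝ) < n + 1 by positivity)]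
  norm_num [Real.rpow_natCast]

lemma fact_psd (m : ℕ) :
    (Matrix.of fun i j : Fin m =>
      ((((i : ℕ) + (j : ℕ) + 1).factorial : ℝ))).PosSemidef := by
  apply psd_of_form
  · intro i j
    simp only [Matrix.of_apply]
    rw [add_comm (i : ℕ) (j : ℕ)]
  · intro x
    have hval : ∀ i j : Fin m,
        ∫ t in Ioi (0:ℝ), x i * x j * (Real.exp (-t) * t ^ ((i : ℕ) + (j : ℕ) + 1))
          = x i * ((((i : ℕ) + (j : ℕ) + 1).factorial : ℝ)) * x j := by
      intro i j
      rw [MeasureTheory.integral_const_mul, exp_pow_integral]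
      ring
    have hsum : ∑ i, ∑ j, x i * (Matrix.of fun i j : Fin m =>
          ((((i : ℕ) + (j : ℕ) + 1).factorial : ℝ))) i j * x j
        = ∫ t in Ioi (0:ℝ), Real.exp (-t) * t * (∑ i, x i * t ^ (i : ℕ))^2 := by
      have hptwise : ∀ t : ℝ, Real.exp (-t) * t * (∑ i, x i * t ^ (i : ℕ))^2
          = ∑ i, ∑ j, x i * x j * (Real.exp (-t) * t ^ ((i : ℕ) + (j : ℕ) + 1)) := by
        intro t
        rw [sq, Finset.sum_mul_sum, Finset.mul_sum]
        refine Finset.sum_congr rfl fun i _ => ?_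
        rw [Finset.mul_sum]
        refine Finset.sum_congr rfl fun j _ => ?_
        rw [pow_add, pow_add, pow_one]
        ring
      rw [MeasureTheory.integral_congr_ae (Filter.EventuallyEq.of_eq (funext hptwise))]
      rw [MeasureTheory.integral_finset_sum]
      · refine Finset.sum_congr rfl fun i _ => ?_
        rw [MeasureTheory.integral_finset_sum]
        · exact Finset.sum_congr rfl fun j _ => (hval i j).symm
        · intro j _
          exact ((exp_pow_integrable _).const_mul _)
      · intro i _
        apply MeasureTheory.integrable_finset_sum
        intro j _
        exact ((exp_pow_integrable _).const_mul _)
    rw [hsum]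
    apply MeasureTheory.setIntegral_nonneg measurableSet_Ioi
    intro t ht
    have : 0 ≤ t := le_of_lt ht
    positivity

lemma hilbert_pow_psd (m k : ℕ) :
    (Matrix.of fun i j : Fin m => (1 / ((i : ℕ) + (j : ℕ) + 2 : ℝ)) ^ k).PosSemidef := by
  induction k with
  | zero =>
    apply psd_of_form
    · intro i j; simp
    · intro x
      simp only [Matrix.of_apply, pow_zero, mul_one]
      have : ∑ i, ∑ j, x i * x j = (∑ i, x i) ^ 2 := by
        rw [sq, Finset.sum_mul_sum]
      rw [this]
      positivity
  | succ k ih =>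
    have h := schur (hilbert_psd m) ih
    have : (Matrix.of fun i j : Fin m =>
        (Matrix.of fun i j : Fin m => (1 / ((i : ℕ) + (j : ℕ) + 2 : ℝ))) i j *
        (Matrix.of fun i j : Fin m => (1 / ((i : ℕ) + (j : ℕ) + 2 : ℝ)) ^ k) i j)
        = Matrix.of fun i j : Fin m => (1 / ((i : ℕ) + (j : ℕ) + 2 : ℝ)) ^ (k + 1) := by
      ext i j
      simp only [Matrix.of_apply]
      ring
    rwa [this] at h

/-- The Hankel matrix with entries `(i+j+1)!/(i+j+2)^(2p)`, `0 ≤ i,j ≤ N`,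
is positive semidefinite. -/
theorem stmt4 (p N : ℕ) :
    (Matrix.of fun i j : Fin (N + 1) =>
      ((((i : ℕ) + (j : ℕ) + 1).factorial : ℝ) /
        ((i : ℕ) + (j : ℕ) + 2 : ℝ) ^ (2 * p))).PosSemidef := by
  have h := schur (fact_psd (N + 1)) (hilbert_pow_psd (N + 1) (2 * p))
  have heq : (Matrix.of fun i j : Fin (N + 1) =>
      (Matrix.of fun i j : Fin (N + 1) => ((((i : ℕ) + (j : ℕ) + 1).factorial : ℝ))) i j *
      (Matrix.of fun i j : Fin (N + 1) => (1 / ((i : ℕ) + (j : ℕ) + 2 : ℝ)) ^ (2 * p)) i j)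
      = Matrix.of fun i j : Fin (N + 1) =>
        ((((i : ℕ) + (j : ℕ) + 1).factorial : ℝ) /
          ((i : ℕ) + (j : ℕ) + 2 : ℝ) ^ (2 * p)) := by
    ext i j
    simp only [Matrix.of_apply]
    rw [div_pow, one_pow, mul_one_div]
  rwa [heq] at h
end

section
/- Let p ∈ ℕ. For all complex sequences (a_n)_{n≥0} and (b_n)_{n≥0} with ∑_{n=0}^∞ (n!/(n+1)^{2p})|a_n|² < ∞ and ∑_{n=0}^∞ (n!/(n+1)^{2p})|b_n|² < ∞, both series below converge and ∑_{n=0}^∞ (n!/(n+1)^{2p}) a_{n+1} · conj(b_n) = ∑_{n=0}^∞ (n!/(n+1)^{2p}) a_n · conj(c_n), where c_0 = 0 and c_{n+1} = ((n+2)^{2p}/(n+1)^{2p+1}) b_n. In other words, in the space 𝓗_p(ℂ) the adjoint of the backward-shift operator R₀ is given on monomials by R₀* z^n = ((n+2)^{2p}/(n+1)^{2p+1}) z^{n+1}. -/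
open ComplexConjugate

/-- In `𝓗_p(ℂ)` the adjoint of the backward shift `R₀` is given on monomials by
`R₀* z^n = ((n+2)^(2p)/(n+1)^(2p+1)) z^(n+1)`: for coefficient sequences `a`, `b`
in the space, `⟨R₀ a, b⟩ = ⟨a, c⟩` where `c` is the sequence of coefficients of `R₀* b`. -/
theorem stmt5 (p : ℕ) (a b c : ℕ → ℂ)
    (ha : Summable fun n : ℕ => ((n.factorial : ℝ) / ((n : ℝ) + 1) ^ (2 * p)) * ‖a n‖ ^ 2)
    (hb : Summable fun n : ℕ => ((n.factorial : ℝ) / ((n : ℝ) + 1) ^ (2 * p)) * ‖b n‖ ^ 2)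
    (hc0 : c 0 = 0)
    (hc : ∀ n : ℕ, c (n + 1) = (((n : ℂ) + 2) ^ (2 * p) / ((n : ℂ) + 1) ^ (2 * p + 1)) * b n) :
    Summable (fun n : ℕ =>
      ((n.factorial : ℂ) / ((n : ℂ) + 1) ^ (2 * p)) * (a (n + 1) * conj (b n))) ∧
    Summable (fun n : ℕ =>
      ((n.factorial : ℂ) / ((n : ℂ) + 1) ^ (2 * p)) * (a n * conj (c n))) ∧
    ∑' n : ℕ, ((n.factorial : ℂ) / ((n : ℂ) + 1) ^ (2 * p)) * (a (n + 1) * conj (b n)) =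
      ∑' n : ℕ, ((n.factorial : ℂ) / ((n : ℂ) + 1) ^ (2 * p)) * (a n * conj (c n)) := by
  set w : ℕ → ℝ := fun n => ((n.factorial : ℝ) / ((n : ℝ) + 1) ^ (2 * p)) with hw
  set f : ℕ → ℂ := fun n =>
    ((n.factorial : ℂ) / ((n : ℂ) + 1) ^ (2 * p)) * (a (n + 1) * conj (b n)) with hfdef
  set g : ℕ → ℂ := fun n =>
    ((n.factorial : ℂ) / ((n : ℂ) + 1) ^ (2 * p)) * (a n * conj (c n)) with hgdef
  -- shift relation : g (n+1) = f n
  have hgf : ∀ n : ℕ, g (n + 1) = f n := by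
    intro n
    have h1 : ((n : ℂ) + 1) ≠ 0 := Nat.cast_add_one_ne_zero n
    have h2 : ((n : ℂ) + 2) ≠ 0 := by
      have : ((n : ℂ) + 2) = ((n + 2 : ℕ) : ℂ) := by push_cast; ring
      rw [this]
      exact Nat.cast_ne_zero.2 (by omega)
    simp only [hgdef, hfdef, hc n]
    have hfac : ((n+1).factorial : ℂ) = ((n:ℂ)+1) * (n.factorial : ℂ) := by
      rw [Nat.factorial_succ]; push_cast; ring
    have hcast : (((n+1:ℕ) : ℂ)) = (n:ℂ) + 1 := by push_cast; ring
    rw [hcast, hfac]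
    simp only [map_mul, map_div₀, map_pow, map_add, Complex.conj_natCast, map_one, map_ofNat]
    have h2' : ((n:ℂ)+1+1) = (n:ℂ)+2 := by ring
    rw [h2']
    have key : ((n:ℂ)+1) * (n.factorial:ℂ) / ((n:ℂ)+2)^(2*p) *
        (((n:ℂ)+2)^(2*p) / ((n:ℂ)+1)^(2*p+1)) = (n.factorial:ℂ) / ((n:ℂ)+1)^(2*p) := by
      have hp2 : ((n:ℂ)+2)^(2*p) ≠ 0 := pow_ne_zero _ h2
      have hp1 : ((n:ℂ)+1)^(2*p) ≠ 0 := pow_ne_zero _ h1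
      rw [pow_succ, div_mul_div_comm]
      field_simp
    calc ((n:ℂ)+1) * (n.factorial:ℂ) / ((n:ℂ)+2)^(2*p) *
          (a (n+1) * (((n:ℂ)+2)^(2*p) / ((n:ℂ)+1)^(2*p+1) * conj (b n)))
        = (((n:ℂ)+1) * (n.factorial:ℂ) / ((n:ℂ)+2)^(2*p) *
            (((n:ℂ)+2)^(2*p) / ((n:ℂ)+1)^(2*p+1))) * (a (n+1) * conj (b n)) := by ring
      _ = (n.factorial:ℂ) / ((n:ℂ)+1)^(2*p) * (a (n+1) * conj (b n)) := by rw [key]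
  -- summability of w n * ‖a (n+1)‖^2
  have ha' : Summable fun n : ℕ => w n * ‖a (n+1)‖ ^ 2 := by
    have hshift : Summable fun n : ℕ => w (n+1) * ‖a (n+1)‖ ^ 2 :=
      (summable_nat_add_iff (f := fun n : ℕ => w n * ‖a n‖ ^ 2) 1).2 ha
    apply Summable.of_nonneg_of_le (fun n => by positivity)
      (fun n => ?_) (hshift.mul_left ((2:ℝ) ^ (2*p)))
    have hle : w n ≤ 2 ^ (2*p) * w (n+1) := by
      rw [hw]
      simp only
      have hcast : (((n+1:ℕ) : ℝ)) = (n:ℝ) + 1 := by push_cast; ring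
      rw [hcast, ← mul_div_assoc]
      rw [div_le_div_iff₀ (by positivity) (by positivity)]
      have hfac : (((n+1).factorial : ℝ)) = ((n:ℝ)+1) * (n.factorial : ℝ) := by
        rw [Nat.factorial_succ]; push_cast; ring
      rw [hfac]
      have e1 : ((n:ℝ)+1+1)^(2*p) ≤ 2^(2*p) * ((n:ℝ)+1)^(2*p) := by
        rw [← mul_pow]
        apply pow_le_pow_left₀ (by positivity)
        nlinarith [Nat.cast_nonneg (α := ℝ) n]
      have hf0 : (0:ℝ) < (n.factorial : ℝ) := by
        exact_mod_cast Nat.factorial_pos n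
      calc (n.factorial:ℝ) * ((n:ℝ)+1+1)^(2*p)
          ≤ (n.factorial:ℝ) * (2^(2*p) * ((n:ℝ)+1)^(2*p)) :=
            mul_le_mul_of_nonneg_left e1 hf0.le
        _ ≤ (((n:ℝ)+1) * (n.factorial:ℝ)) * (2^(2*p) * ((n:ℝ)+1)^(2*p)) := by
            apply mul_le_mul_of_nonneg_right _ (by positivity)
            nlinarith [Nat.cast_nonneg (α := ℝ) n]
        _ = 2^(2*p) * (((n:ℝ)+1) * (n.factorial:ℝ)) * ((n:ℝ)+1)^(2*p) := by ring
    calc w n * ‖a (n+1)‖ ^ 2 ≤ (2 ^ (2*p) * w (n+1)) * ‖a (n+1)‖ ^ 2 := by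
          apply mul_le_mul_of_nonneg_right hle (by positivity)
      _ = 2 ^ (2*p) * (w (n+1) * ‖a (n+1)‖ ^ 2) := by ring
  -- summability of f
  have hsf : Summable f := by
    apply Summable.of_norm_bounded (((ha'.add hb).mul_left (1/2)))
    intro n
    have hnorm : ‖f n‖ = w n * (‖a (n+1)‖ * ‖b n‖) := by
      have hsc : ((n.factorial : ℂ) / ((n : ℂ) + 1) ^ (2 * p)) = ((w n : ℝ) : ℂ) := by
        rw [hw]; push_cast; ring
      rw [hfdef]
      have hwpos : (0:ℝ) < w n := by simp only [hw]; positivity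
      simp only [hsc, norm_mul, Complex.norm_real, RCLike.norm_conj, Real.norm_eq_abs]
      rw [abs_of_pos hwpos]
    rw [hnorm]
    have h1 : ‖a (n+1)‖ * ‖b n‖ ≤ (1/2) * (‖a (n+1)‖^2 + ‖b n‖^2) := by
      nlinarith [sq_nonneg (‖a (n+1)‖ - ‖b n‖)]
    have hwn : 0 < w n := by rw [hw]; positivity
    calc w n * (‖a (n+1)‖ * ‖b n‖) ≤ w n * ((1/2) * (‖a (n+1)‖^2 + ‖b n‖^2)) :=
          mul_le_mul_of_nonneg_left h1 hwn.le
      _ = 1/2 * (w n * ‖a (n+1)‖^2 + w n * ‖b n‖^2) := by ring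
  -- summability of g
  have hsg : Summable g := by
    apply (summable_nat_add_iff (f := g) 1).1
    simpa only [hgf] using hsf
  refine ⟨hsf, hsg, ?_⟩
  have hg0 : g 0 = 0 := by simp [hgdef, hc0]
  have := Summable.tsum_eq_zero_add hsg
  rw [hg0, zero_add] at this
  rw [this]
  exact (tsum_congr hgf).symm
end

section
/- Let p ∈ ℕ. Let R₀ be the backward-shift operator on ℂ[X] (R₀ X^n = X^{n−1} for n ≥ 1, R₀ 1 = 0) and let R₀* be the linear operator defined by R₀* X^n = ((n+2)^{2p}/(n+1)^{2p+1}) X^{n+1} (the 𝓗_p-adjoint of R₀). Then (R₀ R₀* − R₀* R₀)(1) = 4^p, and for every n ≥ 1, (R₀ R₀* − R₀* R₀)(X^n) = ((n+2)^{2p}/(n+1)^{2p+1} − (n+1)^{2p}/n^{2p+1}) X^n, i.e. the commutator acts diagonally with these eigenvalues. -/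
lemma aux_divX (c : ℂ) (k : ℕ) :
    (Polynomial.C c * Polynomial.X ^ (k + 1)).divX = Polynomial.C c * Polynomial.X ^ k := by
  rw [Polynomial.divX_C_mul, Polynomial.divX_X_pow]
  simp

/-- In `𝓗_p(ℂ)`, the commutator `[R₀, R₀*]` acts diagonally on monomials:
`(R₀R₀* − R₀*R₀)(1) = 4^p` and, for `n ≥ 1`,
`(R₀R₀* − R₀*R₀)(X^n) = ((n+2)^(2p)/(n+1)^(2p+1) − (n+1)^(2p)/n^(2p+1)) X^n`,
where `R₀` is the backward shift (`Polynomial.divX`) and `R₀*` is its `𝓗_p`-adjoint,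
given by `R₀* X^n = ((n+2)^(2p)/(n+1)^(2p+1)) X^(n+1)`. -/
theorem stmt10 (p : ℕ) (Rstar : Polynomial ℂ →ₗ[ℂ] Polynomial ℂ)
    (h : ∀ n : ℕ,
      Rstar (Polynomial.X ^ n) =
        Polynomial.C (((n : ℂ) + 2) ^ (2 * p) / ((n : ℂ) + 1) ^ (2 * p + 1)) *
          Polynomial.X ^ (n + 1)) :
    (Rstar (1 : Polynomial ℂ)).divX - Rstar ((1 : Polynomial ℂ).divX) =
      Polynomial.C ((4 : ℂ) ^ p) ∧
    ∀ n : ℕ, 1 ≤ n →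
      (Rstar (Polynomial.X ^ n)).divX - Rstar ((Polynomial.X ^ n).divX) =
        Polynomial.C (((n : ℂ) + 2) ^ (2 * p) / ((n : ℂ) + 1) ^ (2 * p + 1) -
            ((n : ℂ) + 1) ^ (2 * p) / (n : ℂ) ^ (2 * p + 1)) *
          Polynomial.X ^ n := by
  constructor
  · have h0 := h 0
    simp only [pow_zero] at h0
    rw [h0, Polynomial.divX_one, map_zero, sub_zero, aux_divX, pow_zero, mul_one]
    congr 1
    norm_num
    rw [pow_mul]
    norm_num
  · intro n hn
    obtain ⟨m, rfl⟩ := Nat.exists_eq_add_of_le hn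
    rw [h, aux_divX, Polynomial.divX_X_pow]
    simp only [Nat.add_eq_zero, one_ne_zero, false_and, if_false, Nat.add_sub_cancel_left]
    rw [h m, Polynomial.C_sub, sub_mul]
    push_cast
    ring_nf
end

section
/- Let p ∈ ℕ and x ∈ ℝ. Let T be the operator on entire functions defined by (Tg)(z) = g(z) + z·g'(z) (i.e. T = 𝟙 + M_z∂), and let f(z) = exp(zx − z²/2). Then for every z ∈ ℂ the series ∑_{n=0}^∞ ((n+1)^p H_n(x)/n!) z^n converges and equals (T^p f)(z), where T^p is the p-fold iterate of T. Equivalently, the kernel A_p(z,x) = (1/(2π))^{1/4} ∑_{n=0}^∞ ((n+1)^p H_n(x)/n!) e^{−x²/4} z^n of the 𝓗_p-Bargmann transform satisfies A_p(z,x) = (𝟙 + M_z∂)^p A(z,x). -/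
set_option maxHeartbeats 800000

open FormalMultilinearSeries Polynomial

namespace Stmt12Aux

lemma hasSum_congr {f g : ℕ → ℂ} {a : ℂ} (hf : HasSum f a) (h : ∀ n, f n = g n) :
    HasSum g a := (funext h : f = g) ▸ hf

/-- If a scalar power series converges everywhere, the function it sums to has this
power series on the whole plane. -/
lemma keyA (c : ℕ → ℂ) (g : ℂ → ℂ) (h : ∀ z : ℂ, HasSum (fun n : ℕ => c n * z ^ n) (g z)) :
    HasFPowerSeriesOnBall g (ofScalars ℂ c) 0 ⊤ := by
  have hrad : ∀ r : NNReal, (r : ENNReal) ≤ (ofScalars ℂ c).radius := by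
    intro r
    have hs := (h ((r : ℝ) : ℂ)).summable
    obtain ⟨C, hC⟩ := hs.tendsto_atTop_zero.norm.bddAbove_range
    apply FormalMultilinearSeries.le_radius_of_bound _ C
    intro n
    have hnorm : ‖ofScalars ℂ c n‖ ≤ ‖c n‖ := by
      rw [ofScalars]
      refine (norm_smul_le (c n) (ContinuousMultilinearMap.mkPiAlgebraFin ℂ n ℂ)).trans ?_
      rw [ContinuousMultilinearMap.norm_mkPiAlgebraFin, mul_one]
    have h2 : ‖c n * ((r : ℝ) : ℂ) ^ n‖ = ‖c n‖ * (r : ℝ) ^ n := by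
      rw [norm_mul, norm_pow]
      norm_num
    have h3 : ‖ofScalars ℂ c n‖ * (r : ℝ) ^ n ≤ ‖c n‖ * (r : ℝ) ^ n := by gcongr
    exact h3.trans (h2 ▸ hC ⟨n, rfl⟩)
  constructor
  · exact (ENNReal.eq_top_of_forall_nnreal_le hrad).ge
  · exact ENNReal.zero_lt_top
  · intro y _
    simpa only [ofScalars_apply_eq, smul_eq_mul, zero_add] using h y

lemma keyB {c : ℕ → ℂ} {g : ℂ → ℂ} (h : HasFPowerSeriesOnBall g (ofScalars ℂ c) 0 ⊤) (z : ℂ) :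
    HasSum (fun n : ℕ => (((n : ℂ) + 1) * c n) * z ^ n) (g z + z * deriv g z) := by
  have hmem : ∀ w : ℂ, w ∈ Metric.eball (0 : ℂ) ⊤ := fun w => by simp
  have hg : HasSum (fun n : ℕ => c n * z ^ n) (g z) := by
    simpa only [ofScalars_apply_eq, smul_eq_mul, zero_add] using h.hasSum (hmem z)
  have hd0 : HasSum (fun n : ℕ => (ofScalars ℂ c).derivSeries n (fun _ => z)) (fderiv ℂ g z) := by
    simpa only [zero_add] using h.fderiv.hasSum (hmem z)
  have hd1 : HasSum (fun n : ℕ => ((ofScalars ℂ c).derivSeries n (fun _ => z)) z)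
      (fderiv ℂ g z z) := by
    have hd1' := (ContinuousLinearMap.apply ℂ ℂ z).hasSum hd0
    simpa only [ContinuousLinearMap.apply_apply] using hd1'
  have hfz : fderiv ℂ g z z = z * deriv g z := by
    have h1 : (fderiv ℂ g z) z = (fderiv ℂ g z) (z • 1) := by simp
    rw [h1, (fderiv ℂ g z).map_smul, fderiv_apply_one_eq_deriv, smul_eq_mul]
  have hterm : ∀ n : ℕ, ((ofScalars ℂ c).derivSeries n (fun _ => z)) z
      = (((n : ℂ) + 1) * c (n + 1)) * z ^ (n + 1) := by
    intro n
    rw [FormalMultilinearSeries.derivSeries_apply_diag, ofScalars_apply_eq, smul_eq_mul,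
      ← Nat.cast_smul_eq_nsmul ℂ, smul_eq_mul]
    push_cast
    ring
  have hd2 : HasSum (fun n : ℕ => (((n : ℂ) + 1) * c (n + 1)) * z ^ (n + 1)) (z * deriv g z) := by
    rw [← hfz]
    exact hasSum_congr hd1 hterm
  have hd3 : HasSum (fun n : ℕ => ((n : ℂ) * c n) * z ^ n) (z * deriv g z) := by
    have hd2' : HasSum (fun n : ℕ => (((n + 1 : ℕ) : ℂ) * c (n + 1)) * z ^ (n + 1))
        (z * deriv g z) := hasSum_congr hd2 (fun n => by push_cast; ring)
    have h4 := (hasSum_nat_add_iff (f := fun n : ℕ => ((n : ℂ) * c n) * z ^ n) 1).mp hd2'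
    simpa using h4
  exact hasSum_congr (hg.add hd3) (fun n => by ring)

noncomputable def f (x : ℝ) : ℂ → ℂ := fun w => Complex.exp (w * (x : ℂ) - w ^ 2 / 2)

lemma f_hasDerivAt (x : ℝ) (z : ℂ) : HasDerivAt (f x) (((x : ℂ) - z) * f x z) z := by
  have h1 : HasDerivAt (fun w : ℂ => w * (x : ℂ) - w ^ 2 / 2) ((x : ℂ) - z) z := by
    have ha : HasDerivAt (fun w : ℂ => w * (x : ℂ)) (x : ℂ) z := by
      simpa using (hasDerivAt_id z).mul_const (x : ℂ)
    have hb : HasDerivAt (fun w : ℂ => w ^ 2 / 2) z z := by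
      have := (hasDerivAt_pow 2 z).div_const 2
      norm_num at this
      simpa using this
    exact ha.sub hb
  show HasDerivAt (fun w => Complex.exp (w * (x : ℂ) - w ^ 2 / 2))
    (((x : ℂ) - z) * Complex.exp (z * (x : ℂ) - z ^ 2 / 2)) z
  rw [mul_comm ((x : ℂ) - z)]
  exact h1.cexp

lemma f_differentiable (x : ℝ) : Differentiable ℂ (f x) :=
  fun z => (f_hasDerivAt x z).differentiableAt

lemma D1 (x : ℝ) (n : ℕ) (z : ℂ) :
    HasDerivAt (fun w => (aeval ((x : ℂ) - w) (hermite n)) * f x w)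
      ((aeval ((x : ℂ) - z) (hermite (n + 1))) * f x z) z := by
  have hq : HasDerivAt (fun w : ℂ => (x : ℂ) - w) (-1) z := by
    simpa using (hasDerivAt_id z).const_sub (x : ℂ)
  have hP := (Polynomial.hasDerivAt_aeval (q := hermite n) ((x : ℂ) - z)).comp z hq
  have hp : HasDerivAt (fun w : ℂ => aeval ((x : ℂ) - w) (hermite n))
      (-(aeval ((x : ℂ) - z) (derivative (hermite n)))) z := by
    rw [mul_neg_one] at hP
    exact hP
  have hmul := hp.mul (f_hasDerivAt x z)
  have heq : -(aeval ((x : ℂ) - z) (derivative (hermite n))) * f x z +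
      (aeval ((x : ℂ) - z) (hermite n)) * (((x : ℂ) - z) * f x z)
      = (aeval ((x : ℂ) - z) (hermite (n + 1))) * f x z := by
    rw [Polynomial.hermite_succ]
    simp only [map_sub, map_mul, aeval_X]
    ring
  rw [heq] at hmul
  exact hmul

lemma D2 (x : ℝ) (n : ℕ) :
    iteratedDeriv n (f x) = fun z => (aeval ((x : ℂ) - z) (hermite n)) * f x z := by
  induction n with
  | zero => funext z; simp [Polynomial.hermite_zero]
  | succ n ih =>
    funext z
    rw [iteratedDeriv_succ, ih]
    exact (D1 x n z).deriv

lemma base (x : ℝ) (z : ℂ) :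
    HasSum (fun n : ℕ => (aeval ((x : ℂ)) (hermite n) / (n.factorial : ℂ)) * z ^ n) (f x z) := by
  have h := Complex.hasSum_taylorSeries_of_entire (f_differentiable x) 0 z
  refine hasSum_congr h (fun n => ?_)
  rw [D2]
  have hf0 : f x 0 = 1 := by simp [f]
  simp only [sub_zero, smul_eq_mul, hf0, mul_one, div_eq_mul_inv]
  ring

lemma main (p : ℕ) (x : ℝ) :
    HasFPowerSeriesOnBall
      ((fun g : ℂ → ℂ => fun w => g w + w * deriv g w)^[p] (f x))
      (ofScalars ℂ (fun n : ℕ =>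
        ((n : ℂ) + 1) ^ p * (aeval ((x : ℂ)) (hermite n) / (n.factorial : ℂ))))
      0 ⊤ := by
  induction p with
  | zero =>
    have hc : (fun n : ℕ =>
        ((n : ℂ) + 1) ^ (0 : ℕ) * (aeval ((x : ℂ)) (hermite n) / (n.factorial : ℂ)))
        = fun n : ℕ => aeval ((x : ℂ)) (hermite n) / (n.factorial : ℂ) := by
      funext n; simp
    rw [Function.iterate_zero_apply, hc]
    exact keyA _ _ (base x)
  | succ p ih =>
    rw [Function.iterate_succ_apply']
    exact keyA _ _ (fun z => hasSum_congr (keyB ih z) (fun n => by ring))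

end Stmt12Aux

/-- Let `T` be the operator `(Tg)(z) = g(z) + z g'(z)` (i.e. `T = 𝟙 + M_z ∂`) and
`f(z) = exp(zx − z²/2)`.  Then `∑_{n=0}^∞ ((n+1)^p H_n(x)/n!) z^n` converges and equals
`(T^p f)(z)`, where `H_n` is the probabilists' Hermite polynomial: the kernel of the
`𝓗_p`-Bargmann transform satisfies `A_p(z,x) = (𝟙 + M_z∂)^p A(z,x)`. -/
theorem stmt12 (p : ℕ) (x : ℝ) (z : ℂ) :
    HasSum
      (fun n : ℕ =>
        (((n : ℂ) + 1) ^ p * Polynomial.aeval (x : ℂ) (Polynomial.hermite n) /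
          (n.factorial : ℂ)) * z ^ n)
      (((fun g : ℂ → ℂ => fun w => g w + w * deriv g w)^[p]
          (fun w => Complex.exp (w * (x : ℂ) - w ^ 2 / 2))) z) := by
  have h := (Stmt12Aux.main p x).hasSum (by simp : z ∈ Metric.eball (0 : ℂ) ⊤)
  rw [zero_add] at h
  exact Stmt12Aux.hasSum_congr h
    (fun n => by
      rw [FormalMultilinearSeries.ofScalars_apply_eq, smul_eq_mul, mul_div_assoc])
end

section
/- Let p ∈ ℕ and x ∈ ℝ. For every z ∈ ℂ, ∑_{n=0}^∞ ((n+1)^p H_n(x)/n!) z^n = ∑_{j=0}^p ∑_{k=0}^j binom(p,j) S(j,k) z^k f^{(k)}(z), where f(z) = exp(zx − z²/2), f^{(k)} is its k-th derivative, and S(j,k) are Stirling numbers of the second kind. Equivalently, the kernel of the 𝓗_p-Bargmann transform satisfies A_p(z,x) = ∑_{j=0}^p ∑_{k=0}^j binom(p,j) S(j,k) z^k (d^k/dz^k) A(z,x). -/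
/-- Stirling numbers of the second kind, `S(n,k) = (1/k!) ∑_{i=0}^k (−1)^i C(k,i) (k−i)^n`,
as complex numbers. -/
noncomputable def stirling2 (n k : ℕ) : ℂ :=
  (1 / (k.factorial : ℂ)) *
    ∑ i ∈ Finset.range (k + 1), (-1 : ℂ) ^ i * (k.choose i : ℂ) * ((k - i : ℕ) : ℂ) ^ n


open Finset fwdDiff

/-- k-th forward difference of m ↦ m^j vanishes when k > j. -/
lemma fwd_pow_eq_zero : ∀ (j : ℕ) {k : ℕ}, j < k →
    (Δ_[(1:ℕ)])^[k] (fun m : ℕ => (m : ℂ) ^ j) = 0 := by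
  intro j
  induction j using Nat.strong_induction_on with
  | _ j IH =>
    intro k hk
    obtain ⟨k', rfl⟩ : ∃ k', k = k' + 1 := ⟨k - 1, by omega⟩
    rw [Function.iterate_succ_apply]
    have hΔ : (Δ_[(1:ℕ)]) (fun m : ℕ => (m : ℂ) ^ j)
        = ∑ i ∈ range j, ((j.choose i : ℂ)) • (fun m : ℕ => (m : ℂ) ^ i) := by
      ext m
      simp only [fwdDiff, Finset.sum_apply, Pi.smul_apply, smul_eq_mul]
      push_cast
      rw [add_pow]
      rw [Finset.sum_range_succ]
      simp [mul_comm]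
    rw [hΔ, fwdDiff_iter_finset_sum]
    refine Finset.sum_eq_zero fun i hi => ?_
    have hij := Finset.mem_range.mp hi
    rw [fwdDiff_iter_const_smul, IH i hij (by omega), smul_zero]

lemma stirling2_eq_fwdDiff (j k : ℕ) :
    stirling2 j k = (k.factorial : ℂ)⁻¹ * (Δ_[(1:ℕ)])^[k] (fun m : ℕ => (m : ℂ) ^ j) 0 := by
  rw [stirling2, fwdDiff_iter_eq_sum_shift, one_div]
  congr 1
  rw [← Finset.sum_range_reflect]
  refine Finset.sum_congr rfl fun i hi => ?_
  have hik : i ≤ k := by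
    have := Finset.mem_range.mp hi; omega
  have h1 : k + 1 - 1 - i = k - i := by omega
  have h2 : k - (k - i) = i := by omega
  rw [h1]
  rw [zsmul_eq_mul, Nat.choose_symm hik, h2]
  push_cast
  ring_nf

lemma stirling2_descFactorial_sum (j n : ℕ) :
    ∑ k ∈ range (j + 1), stirling2 j k * (n.descFactorial k : ℂ) = (n : ℂ) ^ j := by
  set D : ℕ → ℂ := fun k => (Δ_[(1:ℕ)])^[k] (fun m : ℕ => (m : ℂ) ^ j) 0 with hD
  have hterm : ∀ k, stirling2 j k * (n.descFactorial k : ℂ) = (n.choose k : ℂ) * D k := by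
    intro k
    rw [stirling2_eq_fwdDiff, Nat.descFactorial_eq_factorial_mul_choose]
    push_cast
    have : (k.factorial : ℂ) ≠ 0 := Nat.cast_ne_zero.mpr k.factorial_ne_zero
    field_simp
    ring
  have hDzero : ∀ k, j < k → D k = 0 := fun k hk => by
    simp only [hD, fwd_pow_eq_zero j hk, Pi.zero_apply]
  have hNewton : (n : ℂ) ^ j = ∑ k ∈ range (n + 1), (n.choose k : ℂ) * D k := by
    have h := shift_eq_sum_fwdDiff_iter (1 : ℕ) (fun m : ℕ => (m : ℂ) ^ j) n 0
    simpa [nsmul_eq_mul, smul_eq_mul] using h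
  simp only [hterm]
  rw [hNewton]
  have hs1 : ∑ k ∈ range (j + 1), (n.choose k : ℂ) * D k
      = ∑ k ∈ range (max j n + 1), (n.choose k : ℂ) * D k := by
    refine Finset.sum_subset (by intro a ha; simp only [Finset.mem_range] at *; omega) ?_
    intro k _ hk
    simp only [Finset.mem_range, not_lt] at hk
    rw [hDzero k (by omega), mul_zero]
  have hs2 : ∑ k ∈ range (n + 1), (n.choose k : ℂ) * D k
      = ∑ k ∈ range (max j n + 1), (n.choose k : ℂ) * D k := by
    refine Finset.sum_subset (by intro a ha; simp only [Finset.mem_range] at *; omega) ?_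
    intro k _ hk
    simp only [Finset.mem_range, not_lt] at hk
    rw [Nat.choose_eq_zero_of_lt (by omega)]
    simp
  rw [hs1, hs2]

lemma comb_identity (p n : ℕ) :
    ∑ j ∈ range (p + 1), ∑ k ∈ range (j + 1),
        (p.choose j : ℂ) * stirling2 j k * (n.descFactorial k : ℂ) = ((n : ℂ) + 1) ^ p := by
  have : ∀ j ∈ range (p + 1), ∑ k ∈ range (j + 1),
      (p.choose j : ℂ) * stirling2 j k * (n.descFactorial k : ℂ)
      = (p.choose j : ℂ) * (n : ℂ) ^ j := by
    intro j _
    rw [← stirling2_descFactorial_sum j n, Finset.mul_sum]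
    exact Finset.sum_congr rfl fun k _ => by ring
  rw [Finset.sum_congr rfl this, add_pow]
  exact Finset.sum_congr rfl fun j _ => by ring

open Polynomial in
lemma hasDerivAt_kernel (x : ℝ) (z : ℂ) :
    HasDerivAt (fun w : ℂ => Complex.exp (w * x - w ^ 2 / 2))
      (((x : ℂ) - z) * Complex.exp (z * x - z ^ 2 / 2)) z := by
  have h1 : HasDerivAt (fun w : ℂ => w * x - w ^ 2 / 2) ((x : ℂ) - z) z := by
    have := ((hasDerivAt_id z).mul_const (x : ℂ)).sub ((hasDerivAt_pow 2 z).div_const 2)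
    exact this.congr_deriv (by norm_num)
  simpa [mul_comm] using h1.cexp

open Polynomial in
lemma iteratedDeriv_kernel (x : ℝ) (k : ℕ) :
    iteratedDeriv k (fun w : ℂ => Complex.exp (w * x - w ^ 2 / 2))
      = fun z => ((hermite k).map (Int.castRingHom ℂ)).eval ((x : ℂ) - z) *
          Complex.exp (z * x - z ^ 2 / 2) := by
  induction k with
  | zero => simp [iteratedDeriv_zero]
  | succ k ih =>
    ext z
    rw [iteratedDeriv_succ, ih]
    set Q : Polynomial ℂ := (hermite k).map (Int.castRingHom ℂ) with hQ
    have hpoly : HasDerivAt (fun w : ℂ => Q.eval ((x : ℂ) - w))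
        (-Q.derivative.eval ((x : ℂ) - z)) z := by
      have hinner : HasDerivAt (fun w : ℂ => (x : ℂ) - w) (-1) z := by
        simpa using (hasDerivAt_id z).const_sub (x : ℂ)
      have := (Q.hasDerivAt ((x : ℂ) - z)).comp z hinner
      simpa [mul_comm, Function.comp_def] using this
    have hmul := hpoly.mul (hasDerivAt_kernel x z)
    rw [HasDerivAt.deriv (f := fun w => Q.eval ((x : ℂ) - w) * Complex.exp (w * x - w ^ 2 / 2)) hmul]
    have hmap : (hermite (k + 1)).map (Int.castRingHom ℂ)
        = X * Q - Q.derivative := by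
      rw [hQ, hermite_succ, Polynomial.map_sub, Polynomial.map_mul, Polynomial.map_X,
        derivative_map]
    rw [hmap]
    simp only [eval_sub, eval_mul, eval_X]
    ring

open Polynomial in
lemma hasSum_kernel (x : ℝ) (k : ℕ) (z : ℂ) :
    HasSum (fun n : ℕ =>
        (n.descFactorial k : ℂ) * ((hermite n).map (Int.castRingHom ℂ)).eval (x : ℂ)
          / (n.factorial : ℂ) * z ^ n)
      (z ^ k * iteratedDeriv k (fun w : ℂ => Complex.exp (w * x - w ^ 2 / 2)) z) := by
  set f : ℂ → ℂ := fun w => Complex.exp (w * x - w ^ 2 / 2) with hf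
  set H : ℕ → ℂ := fun n => ((hermite n).map (Int.castRingHom ℂ)).eval (x : ℂ) with hH
  have hfdiff : Differentiable ℂ f := fun w => (hasDerivAt_kernel x w).differentiableAt
  have hdiff : Differentiable ℂ (iteratedDeriv k f) := by
    rw [hf, iteratedDeriv_kernel]
    exact ((((hermite k).map (Int.castRingHom ℂ)).differentiable).comp
      ((differentiable_const _).sub differentiable_id)).mul hfdiff
  have taylor := Complex.hasSum_taylorSeries_of_entire hdiff 0 z
  have hcomp : ∀ n : ℕ, iteratedDeriv n (iteratedDeriv k f) 0 = H (n + k) := by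
    intro n
    have : iteratedDeriv n (iteratedDeriv k f) 0 = iteratedDeriv (n + k) f 0 := by
      simp only [iteratedDeriv_eq_iterate, Function.iterate_add_apply]
    rw [this, hf, iteratedDeriv_kernel]
    simp [hH]
  have h1 : HasSum (fun n : ℕ => (n.factorial : ℂ)⁻¹ * H (n + k) * z ^ n)
      (iteratedDeriv k f z) := by
    refine taylor.congr_fun fun n => ?_
    rw [hcomp n]
    simp only [smul_eq_mul, sub_zero]
    ring
  have h2 := h1.mul_left (z ^ k)
  set F : ℕ → ℂ := fun n => (n.descFactorial k : ℂ) * H n / (n.factorial : ℂ) * z ^ n with hF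
  have h3 : HasSum (fun n : ℕ => F (n + k)) (z ^ k * iteratedDeriv k f z) := by
    refine h2.congr_fun fun n => ?_
    have hfac : ((n + k).descFactorial k : ℂ) * (n.factorial : ℂ) = ((n + k).factorial : ℂ) := by
      rw [← Nat.cast_mul]
      congr 1
      have := Nat.factorial_mul_descFactorial (Nat.le_add_left k n)
      rw [Nat.add_sub_cancel] at this
      rw [mul_comm]; exact this
    have hne : ((n + k).factorial : ℂ) ≠ 0 := Nat.cast_ne_zero.mpr (n + k).factorial_ne_zero
    have hne' : ((n).factorial : ℂ) ≠ 0 := Nat.cast_ne_zero.mpr n.factorial_ne_zero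
    simp only [hF]
    rw [pow_add]
    field_simp
    rw [← hfac]
    ring
  have h4 := (hasSum_nat_add_iff (f := F) k).mp h3
  have h5 : ∑ i ∈ Finset.range k, F i = 0 := by
    refine Finset.sum_eq_zero fun i hi => ?_
    have : i.descFactorial k = 0 := Nat.descFactorial_eq_zero_iff_lt.mpr (Finset.mem_range.mp hi)
    simp [hF, this]
  rw [h5, add_zero] at h4
  exact h4


open Polynomial in
/-- `∑_{n=0}^∞ ((n+1)^p H_n(x)/n!) z^n = ∑_{j=0}^p ∑_{k=0}^j C(p,j) S(j,k) z^k f^(k)(z)`,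
where `f(z) = exp(zx − z²/2)`, `H_n` is the probabilists' Hermite polynomial and `S(j,k)`
are Stirling numbers of the second kind: the kernel of the `𝓗_p`-Bargmann transform
satisfies `A_p(z,x) = ∑_{j=0}^p ∑_{k=0}^j C(p,j) S(j,k) z^k (d^k/dz^k) A(z,x)`. -/
theorem stmt13 (p : ℕ) (x : ℝ) (z : ℂ) :
    HasSum
      (fun n : ℕ =>
        (((n : ℂ) + 1) ^ p * Polynomial.aeval (x : ℂ) (Polynomial.hermite n) /
          (n.factorial : ℂ)) * z ^ n)
      (∑ j ∈ Finset.range (p + 1), ∑ k ∈ Finset.range (j + 1),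
        (p.choose j : ℂ) * stirling2 j k * z ^ k *
          iteratedDeriv k (fun w => Complex.exp (w * (x : ℂ) - w ^ 2 / 2)) z) := by
  set f : ℂ → ℂ := fun w => Complex.exp (w * x - w ^ 2 / 2) with hf
  set H : ℕ → ℂ := fun n => ((hermite n).map (Int.castRingHom ℂ)).eval (x : ℂ) with hH
  have haev : ∀ n : ℕ, Polynomial.aeval (x : ℂ) (hermite n) = H n := by
    intro n
    rw [hH, aeval_def, eval₂_eq_eval_map]
    norm_num
  have hmain : HasSum
      (fun n : ℕ => ∑ j ∈ Finset.range (p + 1), ∑ k ∈ Finset.range (j + 1),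
        (p.choose j : ℂ) * stirling2 j k *
          ((n.descFactorial k : ℂ) * H n / (n.factorial : ℂ) * z ^ n))
      (∑ j ∈ Finset.range (p + 1), ∑ k ∈ Finset.range (j + 1),
        (p.choose j : ℂ) * stirling2 j k * (z ^ k * iteratedDeriv k f z)) := by
    refine hasSum_sum fun j _ => hasSum_sum fun k _ => ?_
    exact (hasSum_kernel x k z).mul_left _
  have hfun : (fun n : ℕ => ∑ j ∈ Finset.range (p + 1), ∑ k ∈ Finset.range (j + 1),
        (p.choose j : ℂ) * stirling2 j k *
          ((n.descFactorial k : ℂ) * H n / (n.factorial : ℂ) * z ^ n))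
      = fun n : ℕ => (((n : ℂ) + 1) ^ p * Polynomial.aeval (x : ℂ) (hermite n) /
          (n.factorial : ℂ)) * z ^ n := by
    funext n
    have h1 : ∀ j ∈ Finset.range (p + 1), ∀ k ∈ Finset.range (j + 1),
        (p.choose j : ℂ) * stirling2 j k *
          ((n.descFactorial k : ℂ) * H n / (n.factorial : ℂ) * z ^ n)
        = (p.choose j : ℂ) * stirling2 j k * (n.descFactorial k : ℂ) *
            (H n / (n.factorial : ℂ) * z ^ n) := by
      intro j _ k _; ring
    calc ∑ j ∈ Finset.range (p + 1), ∑ k ∈ Finset.range (j + 1),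
          (p.choose j : ℂ) * stirling2 j k *
            ((n.descFactorial k : ℂ) * H n / (n.factorial : ℂ) * z ^ n)
        = ∑ j ∈ Finset.range (p + 1), (∑ k ∈ Finset.range (j + 1),
            (p.choose j : ℂ) * stirling2 j k * (n.descFactorial k : ℂ)) *
              (H n / (n.factorial : ℂ) * z ^ n) := by
          refine Finset.sum_congr rfl fun j hj => ?_
          rw [Finset.sum_mul]
          exact Finset.sum_congr rfl fun k hk => h1 j hj k hk
      _ = (∑ j ∈ Finset.range (p + 1), ∑ k ∈ Finset.range (j + 1),
            (p.choose j : ℂ) * stirling2 j k * (n.descFactorial k : ℂ)) *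
              (H n / (n.factorial : ℂ) * z ^ n) := by rw [Finset.sum_mul]
      _ = (((n : ℂ) + 1) ^ p * Polynomial.aeval (x : ℂ) (hermite n) /
          (n.factorial : ℂ)) * z ^ n := by
          rw [comb_identity, haev]; ring
  have hsum : (∑ j ∈ Finset.range (p + 1), ∑ k ∈ Finset.range (j + 1),
        (p.choose j : ℂ) * stirling2 j k * (z ^ k * iteratedDeriv k f z))
      = ∑ j ∈ Finset.range (p + 1), ∑ k ∈ Finset.range (j + 1),
        (p.choose j : ℂ) * stirling2 j k * z ^ k * iteratedDeriv k f z := by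
    exact Finset.sum_congr rfl fun j _ => Finset.sum_congr rfl fun k _ => by ring
  rw [hfun, hsum] at hmain
  exact hmain
end

section
/- Let p ≥ 1 be an integer. There is no Borel measure μ on [0,∞) such that for every n ∈ ℕ the function x ↦ x^n is μ-integrable and ∫_0^∞ x^n dμ(x) = n!·(n+1)^{2p}. (Consequently there is no radial measure σ on ℂ with (1/2π)∫_ℂ z^n z̄^m dσ = n!(n+1)^{2p} δ_{n,m}.) -/
open MeasureTheory

private lemma nat_key (k : ℕ) : 2 * 9 ^ (2 + k) < 16 ^ (2 + k) := by
  have h1 : (9:ℕ) ^ k ≤ 16 ^ k := Nat.pow_le_pow_left (by norm_num) k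
  have : 2 * 9 ^ (2 + k) = 162 * 9 ^ k := by ring
  rw [this]
  have : (16:ℕ) ^ (2 + k) = 256 * 16 ^ k := by ring
  rw [this]
  have h2 : (9:ℕ)^k ≥ 1 := Nat.one_le_pow _ _ (by norm_num)
  nlinarith

/-- For `p ≥ 1` there is no Borel measure on `[0,∞)` (formalized as a measure on `ℝ`
vanishing on `(-∞,0)`) whose `n`-th moment is `n!·(n+1)^(2p)` for every `n`. -/
theorem stmt17 (p : ℕ) (hp : 1 ≤ p) :
    ¬ ∃ μ : Measure ℝ,
        μ (Set.Iio 0) = 0 ∧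
        ∀ n : ℕ, Integrable (fun x : ℝ => x ^ n) μ ∧
          ∫ x, x ^ n ∂μ = (n.factorial : ℝ) * ((n : ℝ) + 1) ^ (2 * p) := by
  rintro ⟨μ, -, h⟩
  have I : ∀ n, Integrable (fun x : ℝ => x ^ n) μ := fun n => (h n).1
  have E : ∀ n : ℕ, ∫ x, x ^ n ∂μ = (n.factorial : ℝ) * ((n : ℝ) + 1) ^ (2 * p) :=
    fun n => (h n).2
  rcases Nat.lt_or_ge p 2 with h2 | h2
  · -- p = 1
    have hp1 : p = 1 := by omega
    subst hp1
    have key : (0:ℝ) ≤ ∫ x, (x^2 - 12*x + 30)^2 ∂μ :=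
      integral_nonneg fun x => sq_nonneg _
    have hfun : (fun x : ℝ => (x^2 - 12*x + 30)^2)
        = fun x : ℝ => x^4 + ((-24)*x^3 + (204*x^2 + ((-720)*x^1 + 900*x^0))) := by
      funext x; ring
    rw [hfun] at key
    have i3 := (I 3).const_mul (-24 : ℝ)
    have i2 := (I 2).const_mul (204 : ℝ)
    have i1 := (I 1).const_mul (-720 : ℝ)
    have i0 := (I 0).const_mul (900 : ℝ)
    have j10 : Integrable (fun x : ℝ => (-720)*x^1 + 900*x^0) μ := i1.add i0
    have j210 : Integrable (fun x : ℝ => 204*x^2 + ((-720)*x^1 + 900*x^0)) μ := i2.add j10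
    have j3210 : Integrable (fun x : ℝ => (-24)*x^3 + (204*x^2 + ((-720)*x^1 + 900*x^0))) μ := i3.add j210
    rw [integral_add (I 4) j3210,
        integral_add i3 j210,
        integral_add i2 j10,
        integral_add i1 i0,
        integral_const_mul, integral_const_mul, integral_const_mul, integral_const_mul,
        E 0, E 1, E 2, E 3, E 4] at key
    norm_num [Nat.factorial] at key
  · -- p ≥ 2
    set c : ℝ := 2 ^ (2 * p) with hc
    have key : (0:ℝ) ≤ ∫ x, (x - c)^2 ∂μ := integral_nonneg fun x => sq_nonneg _
    have hfun : (fun x : ℝ => (x - c)^2)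
        = fun x : ℝ => x^2 + ((-(2*c))*x^1 + (c^2)*x^0) := by
      funext x; ring
    rw [hfun] at key
    have i1 := (I 1).const_mul (-(2*c) : ℝ)
    have i0 := (I 0).const_mul ((c^2) : ℝ)
    have j10 : Integrable (fun x : ℝ => (-(2*c))*x^1 + (c^2)*x^0) μ := i1.add i0
    rw [integral_add (I 2) j10, integral_add i1 i0,
        integral_const_mul, integral_const_mul, E 0, E 1, E 2] at key
    -- key : 0 ≤ 2 * 3^(2p) + (-(2c) * 2^(2p) + c^2 * 1)
    have hkey : (2:ℝ)^(2*p) * 2^(2*p) ≤ 2 * 3^(2*p) := by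
      have hc2 : c^2 = 2^(2*p) * 2^(2*p) := by rw [hc]; ring
      norm_num [Nat.factorial, hc2, hc] at key
      nlinarith [key]
    have hnat : 2 * 9 ^ p < 16 ^ p := by
      obtain ⟨k, rfl⟩ : ∃ k, p = 2 + k := ⟨p - 2, by omega⟩
      exact nat_key k
    have hreal : (2:ℝ) * 9 ^ p < 16 ^ p := by exact_mod_cast hnat
    have e1 : (3:ℝ)^(2*p) = 9^p := by rw [pow_mul]; norm_num
    have e2 : (2:ℝ)^(2*p) * 2^(2*p) = 16^p := by
      rw [← pow_add, show 2*p + 2*p = 4*p by ring, pow_mul]; norm_num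
    rw [e1, e2] at hkey
    linarith
end
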